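/- If f ∈ k[x_1] can be written as f(x_1) = Q(z, x_1^2 + z x_1, x_1^3 + z x_1^2) for some polynomial Q in three variables over k, then f is constant. -/
import Mathlib


/-- If `f ∈ k[x₁]` can be written as `Q(z, x₁² + z x₁, x₁³ + z x₁²)` for some
polynomial `Q` in three variables, then `f` is constant.  Here `x₁` and `z` are
the two variables of `k[x₁, z] = MvPolynomial (Fin 2) k`. -/
theorem constant_of_eq_Q
    (k : Type*) [Field k] [CharZero k]
    (f : Polynomial k) (Q : MvPolynomial (Fin 3) k)
    (h : Polynomial.aeval (MvPolynomial.X 0 : MvPolynomial (Fin 2) k) f =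
      MvPolynomial.aeval
        ![(MvPolynomial.X 1 : MvPolynomial (Fin 2) k),
          MvPolynomial.X 0 ^ 2 + MvPolynomial.X 1 * MvPolynomial.X 0,
          MvPolynomial.X 0 ^ 3 + MvPolynomial.X 1 * MvPolynomial.X 0 ^ 2] Q) :
    ∃ c : k, f = Polynomial.C c := by
  have h1 := congrArg (MvPolynomial.aeval (R := k) (S₁ := Polynomial k) ![Polynomial.X, -Polynomial.X]) h
  have h2 := congrArg (MvPolynomial.aeval (R := k) (S₁ := Polynomial k) ![0, -Polynomial.X]) h
  rw [← Polynomial.aeval_algHom_apply, MvPolynomial.aeval_X, MvPolynomial.comp_aeval_apply] at h1 h2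
  have e : ∀ i, MvPolynomial.aeval (R := k) (S₁ := Polynomial k) ![Polynomial.X, -Polynomial.X]
      (![(MvPolynomial.X 1 : MvPolynomial (Fin 2) k),
          MvPolynomial.X 0 ^ 2 + MvPolynomial.X 1 * MvPolynomial.X 0,
          MvPolynomial.X 0 ^ 3 + MvPolynomial.X 1 * MvPolynomial.X 0 ^ 2] i) =
      MvPolynomial.aeval (R := k) (S₁ := Polynomial k) ![0, -Polynomial.X]
      (![(MvPolynomial.X 1 : MvPolynomial (Fin 2) k),
          MvPolynomial.X 0 ^ 2 + MvPolynomial.X 1 * MvPolynomial.X 0,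
          MvPolynomial.X 0 ^ 3 + MvPolynomial.X 1 * MvPolynomial.X 0 ^ 2] i) := by
    intro i
    fin_cases i <;> simp <;> ring
  simp only [funext e] at h1
  simp only [Matrix.cons_val_zero, Polynomial.aeval_X_left_apply] at h1 h2
  refine ⟨f.coeff 0, ?_⟩
  rw [h1.trans h2.symm, ← Polynomial.coeff_zero_eq_aeval_zero' (A := Polynomial k),
    Polynomial.algebraMap_eq]
  simp
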